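/- arXiv:2209.06982 — 6 statements merged into one kernel-verified Lean document; each statement's English description precedes it below -/
import Mathlib

section
/- Let 1/3 < K < 1, μ = (3K−1)/(1−K), and u₀ ∈ ℝ. Then there exists a function u : [0,1] → ℝ which is continuous on [0,1], infinitely differentiable on (0,1], satisfies u(1) = u₀, and satisfies the background ODE u'(t) = K μ t^{2μ−1} / (t^{2μ} + (1−K) e^{2u(t)}) for every t ∈ (0,1]. -/
open Set Filter Function
open scoped Topology

set_option maxHeartbeats 1000000 in
/-- Existence of the background solution `u` on `(0,1]` with continuity up to `t = 0`. -/
theorem stmt0 (K μ u₀ : ℝ) (hK : 1/3 < K) (hK' : K < 1)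
    (hμ : μ = (3*K - 1)/(1 - K)) :
    ∃ u : ℝ → ℝ,
      ContinuousOn u (Set.Icc 0 1) ∧
      ContDiffOn ℝ (⊤ : ℕ∞) u (Set.Ioc 0 1) ∧
      u 1 = u₀ ∧
      ∀ t ∈ Set.Ioc (0:ℝ) 1,
        HasDerivAt u
          (K * μ * t ^ (2*μ - 1) / (t ^ (2*μ) + (1 - K) * Real.exp (2 * u t))) t := by
  have hK0 : (0:ℝ) < K := by linarith
  have hKne : K ≠ 0 := ne_of_gt hK0
  have h1K : (0:ℝ) < 1 - K := by linarith
  have hμ0 : 0 < μ := by rw [hμ]; exact div_pos (by linarith) h1K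
  set C : ℝ := (1 + Real.exp (2*u₀)) * Real.exp (-(2*u₀)/K) with hCdef
  have hC : 0 < C := by positivity
  set L : ℝ := Real.log C with hLdef
  set uc : ℝ := K * L / (2*(K-1)) with hucdef
  set b : ℝ := u₀ + 1 with hbdef
  set f : ℝ → ℝ := fun v => C * Real.exp (2*v/K) - Real.exp (2*v) with hfdef
  set d : ℝ → ℝ := fun v => (2/K) * (C * Real.exp (2*v/K)) - 2 * Real.exp (2*v) with hddef
  have hCexp : ∀ v : ℝ, C * Real.exp (2*v/K) = Real.exp (L + 2*v/K) := by
    intro v; rw [Real.exp_add, Real.exp_log hC]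
  have hK1ne : K - 1 ≠ 0 := by linarith
  have huc : 2*uc = L + 2*uc/K := by
    rw [hucdef]; field_simp; ring
  have hL : L = 2*uc - 2*uc/K := by linarith
  -- basic values
  have hfuc : f uc = 0 := by
    show C * Real.exp (2*uc/K) - Real.exp (2*uc) = 0
    rw [hCexp uc, ← huc, sub_self]
  have hexp0 : Real.exp (-(2*u₀)/K) * Real.exp (2*u₀/K) = 1 := by
    rw [← Real.exp_add]; ring_nf; exact Real.exp_zero
  have hCe0 : C * Real.exp (2*u₀/K) = 1 + Real.exp (2*u₀) := by
    rw [hCdef, mul_assoc, hexp0, mul_one]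
  have hfu0 : f u₀ = 1 := by
    show C * Real.exp (2*u₀/K) - Real.exp (2*u₀) = 1
    rw [hCe0]; ring
  -- derivative of f
  have hd : ∀ v : ℝ, HasStrictDerivAt f (d v) v := by
    intro v
    have e1 : HasStrictDerivAt (fun x : ℝ => 2*x/K) (2/K) v := by
      simpa using ((hasStrictDerivAt_id v).const_mul (2:ℝ)).div_const K
    have e2 : HasStrictDerivAt (fun x : ℝ => 2*x) (2:ℝ) v := by
      simpa using (hasStrictDerivAt_id v).const_mul (2:ℝ)
    have h1 := (e1.exp).const_mul C
    have h2 := e2.exp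
    have := h1.sub h2
    convert this using 1
    show d v = C * (Real.exp (2*v/K) * (2/K)) - Real.exp (2*v) * 2
    rw [hddef]; ring
    all_goals rfl
  -- positivity of derivative on [uc, ∞)
  have hkey : ∀ v : ℝ, uc ≤ v → Real.exp (2*v) ≤ C * Real.exp (2*v/K) := by
    intro v hv
    rw [hCexp v]
    apply Real.exp_le_exp.2
    have expand : (L + 2*v/K) - 2*v = 2*(v-uc)*((1-K)/K) := by
      rw [hL]; field_simp; ring
    nlinarith [mul_nonneg (mul_nonneg (by norm_num : (0:ℝ) ≤ 2) (sub_nonneg.2 hv))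
      (le_of_lt (div_pos h1K hK0))]
  have h2K : 2 < 2/K := by rw [lt_div_iff₀ hK0]; nlinarith
  have hdpos : ∀ v : ℝ, uc ≤ v → 0 < d v := by
    intro v hv
    have h1 := hkey v hv
    have h2 := Real.exp_pos (2*v)
    show 0 < (2/K) * (C * Real.exp (2*v/K)) - 2 * Real.exp (2*v)
    nlinarith
  -- uc < u₀ < b
  have huc0 : uc < u₀ := by
    have h3 : Real.exp (2*u₀) < Real.exp (L + 2*u₀/K) := by
      rw [← hCexp]; rw [hCe0]; nlinarith [Real.exp_pos (2*u₀)]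
    have h4 := Real.exp_lt_exp.1 h3
    have expand : (L + 2*u₀/K) - 2*u₀ = 2*(u₀-uc)*((1-K)/K) := by
      rw [hL]; field_simp; ring
    nlinarith [div_pos h1K hK0]
  have hucb : uc < b := by rw [hbdef]; linarith
  -- strict monotonicity
  have hcf : Continuous f := by fun_prop
  have hmono : StrictMonoOn f (Set.Ici uc) := by
    apply strictMonoOn_of_deriv_pos (convex_Ici uc) hcf.continuousOn
    intro x hx
    rw [interior_Ici] at hx
    rw [(hd x).hasDerivAt.deriv]
    exact hdpos x (le_of_lt hx)
  have hfb1 : (1:ℝ) < f b := by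
    have := hmono (le_of_lt huc0) (le_of_lt hucb) (by rw [hbdef]; linarith)
    rwa [hfu0] at this
  have hfb0 : (0:ℝ) < f b := by linarith
  set S : Set ℝ := Set.Icc uc b with hSdef
  have hInjS : Set.InjOn f S := (hmono.injOn).mono (Set.Icc_subset_Ici_self)
  have hIVT : Set.Icc (0:ℝ) (f b) ⊆ f '' S := by
    have := intermediate_value_Icc (le_of_lt hucb) hcf.continuousOn
    rwa [hfuc] at this
  set h : ℝ → ℝ := Function.invFunOn f S with hhdef
  have hleft : ∀ x ∈ S, h (f x) = x := fun x hx => hInjS.leftInvOn_invFunOn hx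
  have hfh : ∀ y ∈ Set.Icc (0:ℝ) (f b), f (h y) = y ∧ h y ∈ S := by
    intro y hy
    obtain ⟨x, hx, hfx⟩ := hIVT hy
    exact ⟨Function.invFunOn_eq ⟨x, hx, hfx⟩, Function.invFunOn_mem ⟨x, hx, hfx⟩⟩
  -- main pointwise analysis on (0,1]
  have hmain : ∀ t ∈ Set.Ioc (0:ℝ) 1,
      HasDerivAt (fun t => h (t ^ (2*μ)))
        (K * μ * t ^ (2*μ - 1) / (t ^ (2*μ) + (1 - K) * Real.exp (2 * h (t ^ (2*μ))))) t
      ∧ ContDiffAt ℝ (⊤ : ℕ∞) (fun t => h (t ^ (2*μ))) t := by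
    intro t ht
    obtain ⟨ht0, ht1⟩ := ht
    have hs0 : 0 < t ^ (2*μ) := Real.rpow_pos_of_pos ht0 _
    have hs1 : t ^ (2*μ) ≤ 1 := Real.rpow_le_one (le_of_lt ht0) ht1 (by positivity)
    have hsmem : t ^ (2*μ) ∈ Set.Icc (0:ℝ) (f b) := ⟨le_of_lt hs0, by linarith⟩
    obtain ⟨hfa, haS⟩ := hfh _ hsmem
    set s : ℝ := t ^ (2*μ) with hsdef
    set a : ℝ := h s with hadef
    have ha1 : uc < a := by
      rcases lt_or_eq_of_le haS.1 with h' | h'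
      · exact h'
      · exfalso; rw [← h', hfuc] at hfa; exact absurd hfa.symm (ne_of_gt hs0)
    have ha2 : a < b := by
      rcases lt_or_eq_of_le haS.2 with h' | h'
      · exact h'
      · exfalso; rw [h'] at hfa; linarith
    have hEv : ∀ᶠ x in 𝓝 a, h (f x) = x := by
      filter_upwards [isOpen_Ioo.mem_nhds (⟨ha1, ha2⟩ : a ∈ Set.Ioo uc b)] with x hx
      exact hleft x ⟨le_of_lt hx.1, le_of_lt hx.2⟩
    have hdne : d a ≠ 0 := ne_of_gt (hdpos a haS.1)
    have hlih : HasStrictDerivAt h (d a)⁻¹ s := by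
      have := (hd a).to_local_left_inverse hdne hEv
      rwa [hfa] at this
    have hrpow : HasDerivAt (fun x : ℝ => x ^ (2*μ)) (2*μ * t ^ (2*μ - 1)) t :=
      Real.hasDerivAt_rpow_const (Or.inl (ne_of_gt ht0))
    have hcomp : HasDerivAt (fun t => h (t ^ (2*μ))) ((d a)⁻¹ * (2*μ * t ^ (2*μ - 1))) t :=
      by have := (hlih.hasDerivAt).comp t hrpow; exact this
    have hCea : C * Real.exp (2*a/K) = s + Real.exp (2*a) := by
      have h5 : C * Real.exp (2*a/K) - Real.exp (2*a) = s := hfa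
      linarith
    have hda : d a = (2/K)*(s + (1-K)*Real.exp (2*a)) := by
      show (2/K) * (C * Real.exp (2*a/K)) - 2 * Real.exp (2*a) = _
      rw [hCea]; field_simp; ring
    have hden : 0 < s + (1-K)*Real.exp (2*a) := by
      nlinarith [Real.exp_pos (2*a)]
    have heq : K * μ * t ^ (2*μ - 1) / (s + (1-K)*Real.exp (2*a))
        = (d a)⁻¹ * (2*μ * t ^ (2*μ - 1)) := by
      have hXne : (s + (1-K)*Real.exp (2*a)) ≠ 0 := ne_of_gt hden
      rw [hda]
      field_simp
    constructor
    · rw [heq]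
      exact hcomp
    · have inner1 : ContDiff ℝ (⊤ : ℕ∞) (fun x : ℝ => 2*x/K) :=
        (contDiff_const.mul contDiff_id).div_const K
      have inner2 : ContDiff ℝ (⊤ : ℕ∞) (fun x : ℝ => 2*x) := contDiff_const.mul contDiff_id
      have hcdf : ContDiff ℝ (⊤ : ℕ∞) f :=
        (contDiff_const.mul (Real.contDiff_exp.comp inner1)).sub
          (Real.contDiff_exp.comp inner2)
      have cda : ContDiffAt ℝ (⊤ : ℕ∞) f a := hcdf.contDiffAt
      have hfd : HasFDerivAt f
          ((ContinuousLinearEquiv.unitsEquivAut ℝ (Units.mk0 (d a) hdne)) : ℝ →L[ℝ] ℝ) a :=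
        ((hd a).hasDerivAt).hasFDerivAt_equiv hdne
      have hct : ContDiffAt ℝ (⊤ : ℕ∞) (cda.localInverse hfd (by simp)) (f a) :=
        cda.to_localInverse hfd (by simp)
      have hequ : ∀ᶠ y in 𝓝 (f a), h y = cda.localInverse hfd (by simp) y :=
        (cda.hasStrictFDerivAt' hfd (by simp)).localInverse_unique hEv
      have hcth : ContDiffAt ℝ (⊤ : ℕ∞) h s := by
        rw [← hfa]
        exact hct.congr_of_eventuallyEq hequ
      exact hcth.comp t (Real.contDiffAt_rpow_const_of_ne (ne_of_gt ht0))
  -- monotonicity of h and continuity at 0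
  have hmono_h : StrictMonoOn h (Set.Icc 0 (f b)) := by
    intro y1 hy1 y2 hy2 h12
    obtain ⟨hf1, hS1⟩ := hfh y1 hy1
    obtain ⟨hf2, hS2⟩ := hfh y2 hy2
    by_contra hc
    push_neg at hc
    have := hmono.monotoneOn (Set.Icc_subset_Ici_self hS2) (Set.Icc_subset_Ici_self hS1) hc
    rw [hf1, hf2] at this
    linarith
  have h0uc : h 0 = uc := by
    rw [← hfuc]; exact hleft uc ⟨le_refl uc, le_of_lt hucb⟩
  have hcw0 : ContinuousWithinAt h (Set.Ici 0) 0 := by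
    apply hmono_h.continuousWithinAt_right_of_exists_between
      (Icc_mem_nhdsGE_of_mem ⟨le_refl (0:ℝ), hfb0⟩)
    intro b' hb'
    rw [h0uc] at hb'
    have hminS : min b' b ∈ S := ⟨le_of_lt (lt_min hb' hucb), min_le_right _ _⟩
    refine ⟨f (min b' b), ⟨?_, ?_⟩, ?_⟩
    · rw [← hfuc]
      exact hmono.monotoneOn (Set.mem_Ici.2 (le_refl uc))
        (Set.Icc_subset_Ici_self hminS) hminS.1
    · exact hmono.monotoneOn (Set.Icc_subset_Ici_self hminS)
        (Set.mem_Ici.2 (le_of_lt hucb)) hminS.2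
    · rw [hleft _ hminS, h0uc]
      exact ⟨lt_min hb' hucb, min_le_left _ _⟩
  -- the solution
  refine ⟨fun t => h (t ^ (2*μ)), ?_, ?_, ?_, ?_⟩
  · intro t ht
    rcases eq_or_lt_of_le ht.1 with h0t | h0t
    · -- t = 0
      rw [← h0t]
      have hz : (0:ℝ) ^ (2*μ) = 0 := Real.zero_rpow (by positivity)
      have hw : ContinuousWithinAt (fun x : ℝ => x ^ (2*μ)) (Set.Icc 0 1) 0 :=
        (Real.continuousAt_rpow_const 0 (2*μ) (Or.inr (by positivity))).continuousWithinAt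
      have hmaps : Set.MapsTo (fun x : ℝ => x ^ (2*μ)) (Set.Icc 0 1) (Set.Ici 0) :=
        fun x hx => Real.rpow_nonneg hx.1 _
      have hcw0' : ContinuousWithinAt h (Set.Ici 0) ((0:ℝ) ^ (2*μ)) := by
        rw [hz]; exact hcw0
      exact ContinuousWithinAt.comp (g := h) (f := fun x : ℝ => x ^ (2*μ)) (x := (0:ℝ))
        hcw0' hw hmaps
    · exact ((hmain t ⟨h0t, ht.2⟩).1.continuousAt).continuousWithinAt
  · exact fun t ht => ((hmain t ht).2).contDiffWithinAt
  · show h ((1:ℝ) ^ (2*μ)) = u₀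
    rw [Real.one_rpow, ← hfu0]
    exact hleft u₀ ⟨le_of_lt huc0, by rw [hbdef]; linarith⟩
  · exact fun t ht => (hmain t ht).1
end

section
/- Let 1/3 < K < 1, μ = (3K−1)/(1−K), u₀ ∈ ℝ, and let u : (0,1] → ℝ be differentiable, satisfy the background ODE u'(t) = K μ t^{2μ−1} / (t^{2μ} + (1−K) e^{2u(t)}) on (0,1], and u(1) = u₀. Then the limit u(0) := lim_{t→0⁺} u(t) exists and there is a constant C > 0 (depending only on K and u₀) such that |u(t) − u(0)| ≤ C t^{2μ} for all t ∈ (0,1]. -/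
/-!
Along a solution the quantity `2u − K log(t^{2μ} + e^{2u})` is conserved. Since
`log(t^{2μ} + e^{2u}) ≥ 2u`, this bounds `u` from below, and `u` is increasing, so `u(0⁺) = L`
exists and `u ≥ L`. Then `u' ≤ K μ t^{2μ−1} / ((1−K) e^{2L}) = C (t^{2μ})'` with
`C = K / (2(1−K) e^{2L})`, and integrating from `0⁺` gives `u(t) − L ≤ C t^{2μ}`.
-/

open Set Filter Real Topology

theorem Convex.monotoneOn_of_hasDerivAt_nonneg {D : Set ℝ} (hD : Convex ℝ D) {f f' : ℝ → ℝ}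
    (hf : ∀ x ∈ D, HasDerivAt f (f' x) x) (hf' : ∀ x ∈ D, 0 ≤ f' x) : MonotoneOn f D :=
  monotoneOn_of_hasDerivWithinAt_nonneg hD
    (fun x hx => (hf x hx).continuousAt.continuousWithinAt)
    (fun x hx => (hf x (interior_subset hx)).hasDerivWithinAt)
    (fun x hx => hf' x (interior_subset hx))

theorem Convex.eq_of_hasDerivAt_zero {D : Set ℝ} (hD : Convex ℝ D) {f : ℝ → ℝ}
    (hf : ∀ x ∈ D, HasDerivAt f 0 x) {x y : ℝ} (hx : x ∈ D) (hy : y ∈ D) : f x = f y := by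
  have hmono : MonotoneOn f D := hD.monotoneOn_of_hasDerivAt_nonneg hf fun _ _ => le_rfl
  have hanti : MonotoneOn (fun x => -f x) D :=
    hD.monotoneOn_of_hasDerivAt_nonneg (fun x hx => (hf x hx).neg) fun _ _ => by simp
  rcases le_total x y with hxy | hxy
  · exact le_antisymm (hmono hx hy hxy) (neg_le_neg_iff.1 (hanti hx hy hxy))
  · exact le_antisymm (neg_le_neg_iff.1 (hanti hy hx hxy)) (hmono hy hx hxy)

theorem MonotoneOn.exists_tendsto_nhdsGT {f : ℝ → ℝ} {a b : ℝ} (hab : a < b)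
    (hf : MonotoneOn f (Ioc a b)) (hbdd : BddBelow (f '' Ioc a b)) :
    ∃ L, Tendsto f (𝓝[>] a) (𝓝 L) ∧ ∀ t ∈ Ioc a b, L ≤ f t := by
  have hL := (hf.mono Ioo_subset_Ioc_self).tendsto_nhdsWithin_Ioo_right (nonempty_Ioo.2 hab)
    (hbdd.mono (image_mono Ioo_subset_Ioc_self))
  refine ⟨_, hL, fun t ht => le_of_tendsto hL ?_⟩
  filter_upwards [Ioc_mem_nhdsGT ht.1] with s hs
  exact hf ⟨hs.1, hs.2.trans ht.2⟩ ht hs.2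

noncomputable def backgroundField (K μ t x : ℝ) : ℝ :=
  K * μ * t ^ (2 * μ - 1) / (t ^ (2 * μ) + (1 - K) * exp (2 * x))

def IsBackgroundSolution (K μ : ℝ) (u : ℝ → ℝ) : Prop :=
  ∀ t ∈ Ioc (0 : ℝ) 1, HasDerivAt u (backgroundField K μ t (u t)) t

noncomputable def backgroundFirstIntegral (K μ t x : ℝ) : ℝ :=
  2 * x - K * log (t ^ (2 * μ) + exp (2 * x))

section

variable {K μ t x : ℝ}

theorem backgroundField_nonneg (hK : 0 ≤ K) (hK1 : K ≤ 1) (hμ : 0 ≤ μ) (ht : 0 < t) :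
    0 ≤ backgroundField K μ t x := by
  unfold backgroundField
  have : 0 ≤ 1 - K := by linarith
  positivity

theorem backgroundField_le {L : ℝ} (hK : 0 ≤ K) (hK1 : K < 1) (hμ : 0 ≤ μ) (ht : 0 < t)
    (hLx : L ≤ x) :
    backgroundField K μ t x ≤ K / (2 * (1 - K) * exp (2 * L)) * (2 * μ * t ^ (2 * μ - 1)) := by
  have h1K : 0 < 1 - K := by linarith
  have hden : (1 - K) * exp (2 * L) ≤ t ^ (2 * μ) + (1 - K) * exp (2 * x) := by
    have : exp (2 * L) ≤ exp (2 * x) := exp_le_exp.2 (by linarith)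
    nlinarith [rpow_nonneg ht.le (2 * μ)]
  calc backgroundField K μ t x ≤ K * μ * t ^ (2 * μ - 1) / ((1 - K) * exp (2 * L)) :=
        div_le_div_of_nonneg_left (by positivity) (by positivity) hden
    _ = K / (2 * (1 - K) * exp (2 * L)) * (2 * μ * t ^ (2 * μ - 1)) := by
        field_simp

end

namespace IsBackgroundSolution

variable {K μ : ℝ} {u : ℝ → ℝ}

theorem monotoneOn (hK : 0 ≤ K) (hK1 : K ≤ 1) (hμ : 0 ≤ μ) (hu : IsBackgroundSolution K μ u) :
    MonotoneOn u (Ioc 0 1) :=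
  (convex_Ioc 0 1).monotoneOn_of_hasDerivAt_nonneg hu
    fun _ ht => backgroundField_nonneg hK hK1 hμ ht.1

theorem hasDerivAt_firstIntegral (hK1 : K < 1) (hu : IsBackgroundSolution K μ u) {t : ℝ}
    (ht : t ∈ Ioc (0 : ℝ) 1) :
    HasDerivAt (fun t => backgroundFirstIntegral K μ t (u t)) 0 t := by
  have ht0 : 0 < t := ht.1
  have hpow : HasDerivAt (fun t : ℝ => t ^ (2 * μ)) (2 * μ * t ^ (2 * μ - 1)) t :=
    hasDerivAt_rpow_const (Or.inl ht0.ne')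
  have hexp := ((hu t ht).const_mul 2).exp
  have hsum_pos : 0 < t ^ (2 * μ) + exp (2 * u t) := by positivity
  have hden_pos : 0 < t ^ (2 * μ) + (1 - K) * exp (2 * u t) := by
    have : 0 < 1 - K := by linarith
    positivity
  refine (((hu t ht).const_mul 2).sub
    (((hpow.add hexp).log hsum_pos.ne').const_mul K)).congr_deriv ?_
  simp only [backgroundField, Pi.add_apply]
  field_simp
  ring

theorem firstIntegral_eq (hK1 : K < 1) (hu : IsBackgroundSolution K μ u) {t : ℝ}
    (ht : t ∈ Ioc (0 : ℝ) 1) :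
    backgroundFirstIntegral K μ t (u t) = backgroundFirstIntegral K μ 1 (u 1) :=
  (convex_Ioc 0 1).eq_of_hasDerivAt_zero (fun _ hs => hu.hasDerivAt_firstIntegral hK1 hs) ht
    (right_mem_Ioc.2 one_pos)

theorem firstIntegral_le (hK : 0 ≤ K) (hK1 : K < 1) (hu : IsBackgroundSolution K μ u) {t : ℝ}
    (ht : t ∈ Ioc (0 : ℝ) 1) :
    backgroundFirstIntegral K μ 1 (u 1) / (2 * (1 - K)) ≤ u t := by
  have ht0 : 0 < t := ht.1
  have hlog : 2 * u t ≤ log (t ^ (2 * μ) + exp (2 * u t)) :=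
    (le_log_iff_exp_le (by positivity)).2 (le_add_of_nonneg_left (by positivity))
  have hconst := hu.firstIntegral_eq hK1 ht
  unfold backgroundFirstIntegral at hconst ⊢
  rw [div_le_iff₀ (by linarith)]
  linarith [mul_le_mul_of_nonneg_left hlog hK]

theorem exists_tendsto_nhdsGT (hK : 0 ≤ K) (hK1 : K < 1) (hμ : 0 ≤ μ)
    (hu : IsBackgroundSolution K μ u) :
    ∃ L, Tendsto u (𝓝[>] 0) (𝓝 L) ∧ ∀ t ∈ Ioc (0 : ℝ) 1, L ≤ u t :=
  (hu.monotoneOn hK hK1.le hμ).exists_tendsto_nhdsGT one_pos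
    ⟨_, forall_mem_image.2 fun _ ht => hu.firstIntegral_le hK hK1 ht⟩

theorem sub_le_mul_rpow {L t : ℝ} (hK : 0 ≤ K) (hK1 : K < 1) (hμ : 0 ≤ μ)
    (hu : IsBackgroundSolution K μ u) (hL : Tendsto u (𝓝[>] 0) (𝓝 L))
    (hLu : ∀ s ∈ Ioc (0 : ℝ) 1, L ≤ u s) (ht : t ∈ Ioc (0 : ℝ) 1) :
    u t - L ≤ K / (2 * (1 - K) * exp (2 * L)) * t ^ (2 * μ) := by
  set C := K / (2 * (1 - K) * exp (2 * L))
  have h1K : 0 < 1 - K := by linarith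
  have hC : 0 ≤ C := by positivity
  have hmono : MonotoneOn (fun s => C * s ^ (2 * μ) - u s) (Ioc 0 1) :=
    (convex_Ioc 0 1).monotoneOn_of_hasDerivAt_nonneg
      (fun s hs => ((hasDerivAt_rpow_const (Or.inl hs.1.ne')).const_mul C).sub (hu s hs))
      fun s hs => sub_nonneg.2 (backgroundField_le hK hK1 hμ hs.1 (hLu s hs))
  refine le_of_tendsto (tendsto_const_nhds.sub hL) ?_
  filter_upwards [Ioc_mem_nhdsGT ht.1] with s hs
  have hst : C * s ^ (2 * μ) - u s ≤ C * t ^ (2 * μ) - u t :=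
    hmono ⟨hs.1, hs.2.trans ht.2⟩ ht hs.2
  linarith [mul_nonneg hC (rpow_nonneg hs.1.le (2 * μ))]

end IsBackgroundSolution

theorem stmt2_general (K μ : ℝ) (hK : 1/3 < K) (hK' : K < 1)
    (hμ : μ = (3*K - 1)/(1 - K))
    (u : ℝ → ℝ)
    (hode : ∀ t ∈ Set.Ioc (0:ℝ) 1,
      HasDerivAt u
        (K * μ * t ^ (2*μ - 1) / (t ^ (2*μ) + (1 - K) * Real.exp (2 * u t))) t) :
    ∃ L : ℝ, Filter.Tendsto u (nhdsWithin 0 (Set.Ioi 0)) (nhds L) ∧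
      ∃ C : ℝ, 0 < C ∧ ∀ t ∈ Set.Ioc (0:ℝ) 1, |u t - L| ≤ C * t ^ (2*μ) := by
  have hK0 : 0 < K := by linarith
  have h1K : 0 < 1 - K := by linarith
  have hμ0 : 0 ≤ μ := hμ ▸ div_nonneg (by linarith) h1K.le
  have hu : IsBackgroundSolution K μ u := hode
  obtain ⟨L, hL, hLu⟩ := hu.exists_tendsto_nhdsGT hK0.le hK' hμ0
  refine ⟨L, hL, K / (2 * (1 - K) * exp (2 * L)), by positivity, fun t ht => ?_⟩
  rw [abs_of_nonneg (sub_nonneg.2 (hLu t ht))]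
  exact hu.sub_le_mul_rpow hK0.le hK' hμ0 hL hLu ht

/-- The limit `u(0) = lim_{t → 0⁺} u(t)` exists and `|u(t) − u(0)| ≤ C t^{2μ}`. -/
theorem stmt2 (K μ u₀ : ℝ) (hK : 1/3 < K) (hK' : K < 1)
    (hμ : μ = (3*K - 1)/(1 - K))
    (u : ℝ → ℝ)
    (hode : ∀ t ∈ Set.Ioc (0:ℝ) 1,
      HasDerivAt u
        (K * μ * t ^ (2*μ - 1) / (t ^ (2*μ) + (1 - K) * Real.exp (2 * u t))) t)
    (hinit : u 1 = u₀) :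
    ∃ L : ℝ, Filter.Tendsto u (nhdsWithin 0 (Set.Ioi 0)) (nhds L) ∧
      ∃ C : ℝ, 0 < C ∧ ∀ t ∈ Set.Ioc (0:ℝ) 1, |u t - L| ≤ C * t ^ (2*μ) :=
  stmt2_general K μ hK hK' hμ u hode
end

section
/- Let 1/3 < K < 1, μ = (3K−1)/(1−K), u₀ ∈ ℝ, and let u : (0,1] → ℝ be differentiable, satisfy the background ODE u'(t) = K μ t^{2μ−1} / (t^{2μ} + (1−K) e^{2u(t)}) on (0,1], and u(1) = u₀. Then there is a constant C > 0 (depending only on K and u₀) such that |u'(t)| ≤ C t^{2μ−1} for all t ∈ (0,1]. -/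
/-!
Write `F(t, v) = Kμ t^{2μ-1} / (t^{2μ} + (1-K) e^{2v})` for the right-hand side, so `u' = F(t, u) ≥ 0`.
Dropping `(1-K) e^{2v}` gives `u' ≤ Kμ / t`, which integrates back from `t = 1` to
`u(t) ≥ u(1) + Kμ log t`. Dropping `t^{2μ}` instead and inserting this bound gives
`u' ≤ A t^{2μ(1-K) - 1}`; the exponent is `> -1` exactly because `μ > 0`, so `u'` is integrable at `0`
and `u` is bounded below by some `m`. Then `u' ≤ Kμ t^{2μ-1} / ((1-K) e^{2m})`.
-/

open Set Real

theorem sub_le_sub_of_hasDerivAt_le {f g f' g' : ℝ → ℝ} {a b t : ℝ}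
    (hf : ∀ x ∈ Ioc a b, HasDerivAt f (f' x) x) (hg : ∀ x ∈ Ioc a b, HasDerivAt g (g' x) x)
    (hle : ∀ x ∈ Ioc a b, f' x ≤ g' x) (ht : t ∈ Ioc a b) :
    f b - f t ≤ g b - g t := by
  have hderiv : ∀ x ∈ Ioc a b, HasDerivAt (fun y => g y - f y) (g' x - f' x) x :=
    fun x hx => (hg x hx).sub (hf x hx)
  have hmono : MonotoneOn (fun y => g y - f y) (Ioc a b) := by
    refine monotoneOn_of_hasDerivWithinAt_nonneg (f' := fun x => g' x - f' x) (convex_Ioc a b)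
      (fun x hx => (hderiv x hx).continuousAt.continuousWithinAt) (fun x hx => ?_) (fun x hx => ?_)
    all_goals rw [interior_Ioc] at hx
    · exact (hderiv x (Ioo_subset_Ioc_self hx)).hasDerivWithinAt
    · exact sub_nonneg.2 (hle x (Ioo_subset_Ioc_self hx))
  have := hmono ht (right_mem_Ioc.2 (ht.1.trans_le ht.2)) ht.2
  linarith

namespace BackgroundODE

noncomputable def rhs (K μ t v : ℝ) : ℝ :=
  K * μ * t ^ (2 * μ - 1) / (t ^ (2 * μ) + (1 - K) * exp (2 * v))

variable {K μ t : ℝ}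

theorem rhs_nonneg (hK : K ≤ 1) (hKμ : 0 ≤ K * μ) (ht : 0 < t) (v : ℝ) : 0 ≤ rhs K μ t v := by
  have : 0 ≤ 1 - K := by linarith
  unfold rhs
  positivity

theorem rhs_le_div (hK : K ≤ 1) (hKμ : 0 ≤ K * μ) (ht : 0 < t) (v : ℝ) :
    rhs K μ t v ≤ K * μ / t := by
  have hpow : 0 < t ^ (2 * μ) := rpow_pos_of_pos ht _
  have hsplit : t ^ (2 * μ - 1) = t ^ (2 * μ) / t := by rw [rpow_sub ht, rpow_one]
  calc rhs K μ t v ≤ K * μ * t ^ (2 * μ - 1) / t ^ (2 * μ) := by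
        refine div_le_div_of_nonneg_left (by positivity) hpow ?_
        have : 0 ≤ (1 - K) * exp (2 * v) := mul_nonneg (by linarith) (exp_pos _).le
        linarith
    _ = K * μ / t := by rw [hsplit]; field_simp

theorem rhs_le_of_le (hK : K < 1) (hKμ : 0 ≤ K * μ) (ht : 0 < t) {v w : ℝ} (hwv : w ≤ v) :
    rhs K μ t v ≤ K * μ * t ^ (2 * μ - 1) / ((1 - K) * exp (2 * w)) := by
  have h1K : 0 < 1 - K := by linarith
  refine div_le_div_of_nonneg_left (by positivity) (by positivity) ?_
  have : (1 - K) * exp (2 * w) ≤ (1 - K) * exp (2 * v) := by gcongr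
  linarith [rpow_pos_of_pos ht (2 * μ)]

variable {u : ℝ → ℝ}

theorem add_mul_log_le (hK : K ≤ 1) (hKμ : 0 ≤ K * μ)
    (hode : ∀ t ∈ Ioc (0 : ℝ) 1, HasDerivAt u (rhs K μ t (u t)) t) (ht : t ∈ Ioc (0 : ℝ) 1) :
    u 1 + K * μ * log t ≤ u t := by
  have hlog : ∀ x ∈ Ioc (0 : ℝ) 1, HasDerivAt (fun y => K * μ * log y) (K * μ / x) x :=
    fun x hx => by simpa [div_eq_mul_inv] using (hasDerivAt_log hx.1.ne').const_mul (K * μ)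
  have := sub_le_sub_of_hasDerivAt_le hode hlog (fun x hx => rhs_le_div hK hKμ hx.1 _) ht
  simp only [log_one, mul_zero, zero_sub] at this
  linarith

theorem rhs_le_rpow (hK : K < 1) (hKμ : 0 ≤ K * μ) (ht : 0 < t) {v w : ℝ}
    (hwv : w + K * μ * log t ≤ v) :
    rhs K μ t v ≤ K * μ / ((1 - K) * exp (2 * w)) * t ^ (2 * μ * (1 - K) - 1) := by
  have hexp : exp (2 * (w + K * μ * log t)) = exp (2 * w) * t ^ (2 * (K * μ)) := by
    rw [rpow_def_of_pos ht, ← exp_add]; ring_nf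
  have hsplit : t ^ (2 * μ - 1) = t ^ (2 * μ * (1 - K) - 1) * t ^ (2 * (K * μ)) := by
    rw [← rpow_add ht]; ring_nf
  have h1K : (1 - K) ≠ 0 := by linarith
  have htK : t ^ (2 * (K * μ)) ≠ 0 := (rpow_pos_of_pos ht _).ne'
  refine (rhs_le_of_le hK hKμ ht hwv).trans_eq ?_
  rw [hexp, hsplit]
  field_simp

theorem bddBelow_image_Ioc (hK : K < 1) (hKμ : 0 ≤ K * μ) (hp : 0 < 2 * μ * (1 - K))
    (hode : ∀ t ∈ Ioc (0 : ℝ) 1, HasDerivAt u (rhs K μ t (u t)) t) :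
    BddBelow (u '' Ioc 0 1) := by
  set p := 2 * μ * (1 - K)
  set A := K * μ / ((1 - K) * exp (2 * u 1))
  have hA : 0 ≤ A := div_nonneg hKμ (mul_nonneg (by linarith) (exp_pos _).le)
  have hprim : ∀ x ∈ Ioc (0 : ℝ) 1, HasDerivAt (fun y => A / p * y ^ p) (A * x ^ (p - 1)) x := by
    intro x hx
    refine ((hasDerivAt_rpow_const (p := p) (Or.inl hx.1.ne')).const_mul (A / p)).congr_deriv ?_
    field_simp
  refine ⟨u 1 - A / p, forall_mem_image.2 fun t ht => ?_⟩
  have hcomp := sub_le_sub_of_hasDerivAt_le hode hprim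
    (fun x hx => rhs_le_rpow hK hKμ hx.1 (add_mul_log_le hK.le hKμ hode hx)) ht
  have hprim_nonneg : 0 ≤ A / p * t ^ p := by have := rpow_pos_of_pos ht.1 p; positivity
  rw [one_rpow, mul_one] at hcomp
  linarith

end BackgroundODE

open BackgroundODE in
theorem stmt3_general (K μ : ℝ) (hK : 1/3 < K) (hK' : K < 1)
    (hμ : μ = (3*K - 1)/(1 - K))
    (u : ℝ → ℝ)
    (hode : ∀ t ∈ Set.Ioc (0:ℝ) 1,
      HasDerivAt u
        (K * μ * t ^ (2*μ - 1) / (t ^ (2*μ) + (1 - K) * Real.exp (2 * u t))) t) :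
    ∃ C : ℝ, 0 < C ∧ ∀ t ∈ Set.Ioc (0:ℝ) 1, |deriv u t| ≤ C * t ^ (2*μ - 1) := by
  replace hode : ∀ t ∈ Ioc (0 : ℝ) 1, HasDerivAt u (rhs K μ t (u t)) t := hode
  have h1K : 0 < 1 - K := by linarith
  have hμpos : 0 < μ := hμ ▸ div_pos (by linarith) h1K
  have hKμ : 0 < K * μ := mul_pos (by linarith) hμpos
  obtain ⟨m, hm⟩ := bddBelow_image_Ioc hK' hKμ.le (by positivity) hode
  refine ⟨K * μ / ((1 - K) * exp (2 * m)), by positivity, fun t ht => ?_⟩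
  rw [(hode t ht).deriv, abs_of_nonneg (rhs_nonneg hK'.le hKμ.le ht.1 (u t))]
  calc rhs K μ t (u t) ≤ K * μ * t ^ (2 * μ - 1) / ((1 - K) * exp (2 * m)) :=
        rhs_le_of_le hK' hKμ.le ht.1 (hm (mem_image_of_mem u ht))
    _ = K * μ / ((1 - K) * exp (2 * m)) * t ^ (2 * μ - 1) := by ring

/-- The derivative bound `|u'(t)| ≤ C t^{2μ−1}` for solutions of the background ODE. -/
theorem stmt3 (K μ u₀ : ℝ) (hK : 1/3 < K) (hK' : K < 1)
    (hμ : μ = (3*K - 1)/(1 - K))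
    (u : ℝ → ℝ)
    (hode : ∀ t ∈ Set.Ioc (0:ℝ) 1,
      HasDerivAt u
        (K * μ * t ^ (2*μ - 1) / (t ^ (2*μ) + (1 - K) * Real.exp (2 * u t))) t)
    (hinit : u 1 = u₀) :
    ∃ C : ℝ, 0 < C ∧ ∀ t ∈ Set.Ioc (0:ℝ) 1, |deriv u t| ≤ C * t ^ (2*μ - 1) :=
  stmt3_general K μ hK hK' hμ u hode
end

section
/- Let 1/3 < K < 1, μ = (3K−1)/(1−K), t₀ ∈ (0,1], and let w : (0,t₀] → ℝ be differentiable with w(t) ≠ 0 for all t ∈ (0,t₀] and satisfy the asymptotic ODE w'(t) = K μ t^{2μ−1} w(t) / (t^{2μ} + (1−K) w(t)²) on (0,t₀]. Then the function t ↦ |w(t)|^{1/(1−K)} · (t^{2μ} + w(t)²)^{−K/(2(1−K))} is constant on (0,t₀]. -/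
/-!
With `S = t^{2μ} + w²`, the claimed invariant is `(w² S^{-K})^{1/(2(1-K))}`, so it suffices that
`G = w² S^{-K}` is constant. Along the ODE, with `X = t^{2μ}`, one has
`S^{K+1} G' = 2 w w' (X + (1-K) w²) - K w² X'`, and the ODE says exactly that
`w' (X + (1-K) w²) = (K/2) X' w`, so `G' = 0`.
-/

open Set

theorem eq_of_hasDerivAt_eq_zero_on_Ioc {E : Type*} [NormedAddCommGroup E] [NormedSpace ℝ E]
    {f : ℝ → E} {a b x : ℝ} (hf : ∀ y ∈ Ioc a b, HasDerivAt f 0 y) (hx : x ∈ Ioc a b) :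
    f x = f b := by
  have hsub : Icc x b ⊆ Ioc a b := fun y hy => ⟨hx.1.trans_le hy.1, hy.2⟩
  refine constant_of_has_deriv_right_zero
    (fun y hy => (hf y (hsub hy)).continuousAt.continuousWithinAt)
    (fun y hy => (hf y (hsub (Ico_subset_Icc_self hy))).hasDerivWithinAt) b
    (right_mem_Icc.mpr hx.2) |>.symm

theorem sq_mul_rpow_neg_rpow {x S : ℝ} (hS : 0 ≤ S) (K c : ℝ) :
    (x ^ 2 * S ^ (-K)) ^ c = |x| ^ (2 * c) * S ^ (-K * c) := by
  rw [Real.mul_rpow (sq_nonneg x) (Real.rpow_nonneg hS _), ← Real.rpow_mul hS, ← sq_abs,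
    ← Real.rpow_natCast, ← Real.rpow_mul (abs_nonneg x)]
  norm_num

theorem hasDerivAt_sq_mul_rpow_neg_eq_zero {X w : ℝ → ℝ} {X' w' K t : ℝ}
    (hX : HasDerivAt X X' t) (hw : HasDerivAt w w' t) (hS : 0 < X t + w t ^ 2)
    (hode : w' * (X t + (1 - K) * w t ^ 2) = K / 2 * X' * w t) :
    HasDerivAt (fun s => w s ^ 2 * (X s + w s ^ 2) ^ (-K)) 0 t := by
  have hS' : HasDerivAt (fun s => X s + w s ^ 2) (X' + 2 * w t * w') t := by
    refine (hX.add (hw.fun_pow 2)).congr_deriv ?_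
    push_cast
    ring
  refine ((hw.fun_pow 2).mul (hS'.rpow_const (p := -K) (Or.inl hS.ne'))).congr_deriv ?_
  have hpow : (X t + w t ^ 2) ^ (-K) = (X t + w t ^ 2) ^ (-K - 1) * (X t + w t ^ 2) := by
    rw [← Real.rpow_add_one hS.ne']; ring_nf
  rw [hpow]
  push_cast
  linear_combination (2 * w t * (X t + w t ^ 2) ^ (-K - 1)) * hode

theorem stmt5_general (K μ t₀ : ℝ) (hK' : K < 1)
    (w : ℝ → ℝ)
    (hode : ∀ t ∈ Set.Ioc (0:ℝ) t₀,
      HasDerivAt w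
        (K * μ * t ^ (2*μ - 1) * w t / (t ^ (2*μ) + (1 - K) * (w t)^2)) t) :
    ∀ t ∈ Set.Ioc (0:ℝ) t₀,
      |w t| ^ ((1:ℝ)/(1 - K)) * (t ^ (2*μ) + (w t)^2) ^ (-(K/(2*(1 - K)))) =
      |w t₀| ^ ((1:ℝ)/(1 - K)) * (t₀ ^ (2*μ) + (w t₀)^2) ^ (-(K/(2*(1 - K)))) := by
  have hG : ∀ s ∈ Ioc (0:ℝ) t₀,
      HasDerivAt (fun s => w s ^ 2 * (s ^ (2 * μ) + w s ^ 2) ^ (-K)) 0 s := by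
    intro s hs
    have hX : 0 < s ^ (2 * μ) := Real.rpow_pos_of_pos hs.1 _
    have hD : 0 < s ^ (2 * μ) + (1 - K) * w s ^ 2 := by nlinarith [sq_nonneg (w s)]
    refine hasDerivAt_sq_mul_rpow_neg_eq_zero (Real.hasDerivAt_rpow_const (Or.inl hs.1.ne'))
      (hode s hs) (by positivity) ?_
    rw [div_mul_cancel₀ _ hD.ne']
    ring
  have hexp : ∀ s : ℝ, 0 < s →
      |w s| ^ ((1:ℝ)/(1 - K)) * (s ^ (2*μ) + (w s)^2) ^ (-(K/(2*(1 - K)))) =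
        (w s ^ 2 * (s ^ (2 * μ) + w s ^ 2) ^ (-K)) ^ (1 / (2 * (1 - K))) := fun s hs => by
    rw [sq_mul_rpow_neg_rpow (by positivity)]
    congr 2 <;> field_simp
  intro t ht
  rw [hexp t ht.1, hexp t₀ (ht.1.trans_le ht.2), eq_of_hasDerivAt_eq_zero_on_Ioc hG ht]

/-- The quantity `|w(t)|^{1/(1−K)} (t^{2μ} + w(t)²)^{−K/(2(1−K))}` is conserved by the
asymptotic ODE. -/
theorem stmt5 (K μ t₀ : ℝ) (hK : 1/3 < K) (hK' : K < 1)
    (hμ : μ = (3*K - 1)/(1 - K))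
    (ht₀ : t₀ ∈ Set.Ioc (0:ℝ) 1)
    (w : ℝ → ℝ)
    (hw0 : ∀ t ∈ Set.Ioc (0:ℝ) t₀, w t ≠ 0)
    (hode : ∀ t ∈ Set.Ioc (0:ℝ) t₀,
      HasDerivAt w
        (K * μ * t ^ (2*μ - 1) * w t / (t ^ (2*μ) + (1 - K) * (w t)^2)) t) :
    ∀ t ∈ Set.Ioc (0:ℝ) t₀,
      |w t| ^ ((1:ℝ)/(1 - K)) * (t ^ (2*μ) + (w t)^2) ^ (-(K/(2*(1 - K)))) =
      |w t₀| ^ ((1:ℝ)/(1 - K)) * (t₀ ^ (2*μ) + (w t₀)^2) ^ (-(K/(2*(1 - K)))) :=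
  stmt5_general K μ t₀ hK' w hode
end

section
/- Let 1/3 < K < 1, μ = (3K−1)/(1−K), u₀ ∈ ℝ, and let u : (0,1] → ℝ be differentiable, satisfy the background ODE u'(t) = K μ t^{2μ−1} / (t^{2μ} + (1−K) e^{2u(t)}) on (0,1], and u(1) = u₀. Then lim_{t→0⁺} u(t) exists and equals u₀/(1−K) − (K/(2(1−K))) · ln(1 + e^{2u₀}). -/
private lemma stmt7_aux (K μ a b c : ℝ) (hD : b + (1 - K) * c ≠ 0) (hS : b + c ≠ 0) :
    K * μ * a / (b + (1 - K) * c) -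
      K/2 * (((2*μ) * a + c * (2 * (K * μ * a / (b + (1 - K) * c)))) / (b + c)) = 0 := by
  field_simp
  ring

/-- The limit of the background solution `u` as `t → 0⁺` equals
`u₀/(1−K) − (K/(2(1−K))) ln(1 + e^{2u₀})`. -/
theorem stmt7 (K μ u₀ : ℝ) (hK : 1/3 < K) (hK' : K < 1)
    (hμ : μ = (3*K - 1)/(1 - K))
    (u : ℝ → ℝ)
    (hode : ∀ t ∈ Set.Ioc (0:ℝ) 1,
      HasDerivAt u
        (K * μ * t ^ (2*μ - 1) / (t ^ (2*μ) + (1 - K) * Real.exp (2 * u t))) t)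
    (hinit : u 1 = u₀) :
    Filter.Tendsto u (nhdsWithin 0 (Set.Ioi 0))
      (nhds (u₀ / (1 - K) - (K / (2*(1 - K))) * Real.log (1 + Real.exp (2*u₀)))) := by
  have hKpos : 0 < K := by linarith
  have h1K : 0 < 1 - K := by linarith
  have hμpos : 0 < μ := by
    rw [hμ]; exact div_pos (by linarith) h1K
  set φ : ℝ → ℝ := fun t => u t - K/2 * Real.log (t ^ (2*μ) + Real.exp (2 * u t)) with hφdef
  -- the denominator and the auxiliary sum are positive
  have hDpos : ∀ t ∈ Set.Ioc (0:ℝ) 1,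
      0 < t ^ (2*μ) + (1 - K) * Real.exp (2 * u t) := fun t ht =>
    add_pos (Real.rpow_pos_of_pos ht.1 _) (mul_pos h1K (Real.exp_pos _))
  have hSpos : ∀ t ∈ Set.Ioc (0:ℝ) 1,
      0 < t ^ (2*μ) + Real.exp (2 * u t) := fun t ht =>
    add_pos (Real.rpow_pos_of_pos ht.1 _) (Real.exp_pos _)
  -- φ has derivative zero on (0,1]
  have hφ' : ∀ t ∈ Set.Ioc (0:ℝ) 1, HasDerivAt φ 0 t := by
    intro t ht
    have hu := hode t ht
    set d := K * μ * t ^ (2*μ - 1) / (t ^ (2*μ) + (1 - K) * Real.exp (2 * u t)) with hd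
    have hb : HasDerivAt (fun s : ℝ => s ^ (2*μ)) ((2*μ) * t ^ (2*μ - 1)) t :=
      Real.hasDerivAt_rpow_const (Or.inl ht.1.ne')
    have hexp : HasDerivAt (fun s => Real.exp (2 * u s))
        (Real.exp (2 * u t) * (2 * d)) t := (hu.const_mul 2).exp
    have hS : HasDerivAt (fun s => s ^ (2*μ) + Real.exp (2 * u s))
        ((2*μ) * t ^ (2*μ - 1) + Real.exp (2 * u t) * (2 * d)) t := hb.add hexp
    have hlog := (hS.log (hSpos t ht).ne')
    have hder : HasDerivAt φ
        (d - K/2 * (((2*μ) * t ^ (2*μ - 1) + Real.exp (2 * u t) * (2 * d)) /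
          (t ^ (2*μ) + Real.exp (2 * u t)))) t := hu.sub (hlog.const_mul (K/2))
    have hzero : d - K/2 * (((2*μ) * t ^ (2*μ - 1) + Real.exp (2 * u t) * (2 * d)) /
          (t ^ (2*μ) + Real.exp (2 * u t))) = 0 := by
      rw [hd, show Real.exp (2 * u t) * (2 * (K * μ * t ^ (2*μ - 1) /
            (t ^ (2*μ) + (1 - K) * Real.exp (2 * u t)))) =
          (2*μ) * t ^ (2*μ - 1) * 0 + Real.exp (2 * u t) * (2 * (K * μ * t ^ (2*μ - 1) /
            (t ^ (2*μ) + (1 - K) * Real.exp (2 * u t)))) from by ring]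
      have := stmt7_aux K μ (t ^ (2*μ - 1)) (t ^ (2*μ)) (Real.exp (2 * u t))
        (hDpos t ht).ne' (hSpos t ht).ne'
      linear_combination this
    rwa [hzero] at hder
  -- φ is constant on (0,1]
  set C : ℝ := u₀ - K/2 * Real.log (1 + Real.exp (2 * u₀)) with hCdef
  clear_value C
  have hφ1 : φ 1 = C := by
    simp only [hφdef, hCdef, Real.one_rpow, hinit]
  have hconst : ∀ t ∈ Set.Ioc (0:ℝ) 1, φ t = C := by
    intro t ht
    have hsub : Set.Icc t 1 ⊆ Set.Ioc (0:ℝ) 1 := fun x hx => ⟨lt_of_lt_of_le ht.1 hx.1, hx.2⟩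
    have hcont : ContinuousOn φ (Set.Icc t 1) := fun x hx =>
      ((hφ' x (hsub hx)).continuousAt).continuousWithinAt
    have := constant_of_has_deriv_right_zero hcont
      (fun x hx => (hφ' x (hsub ⟨hx.1, hx.2.le⟩)).hasDerivWithinAt) 1
      ⟨ht.2, le_refl 1⟩
    rw [← hφ1, this]
  -- u is monotone on (0,1]
  have hmono : MonotoneOn u (Set.Ioc (0:ℝ) 1) := by
    have : StrictMonoOn u (Set.Ioc (0:ℝ) 1) := by
      apply strictMonoOn_of_hasDerivWithinAt_pos (f' := fun t =>
          K * μ * t ^ (2*μ - 1) / (t ^ (2*μ) + (1 - K) * Real.exp (2 * u t)))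
        (convex_Ioc 0 1)
        (fun x hx => (hode x hx).continuousAt.continuousWithinAt)
      · intro x hx
        rw [interior_Ioc] at hx
        exact (hode x ⟨hx.1, hx.2.le⟩).hasDerivWithinAt
      · intro x hx
        rw [interior_Ioc] at hx
        exact div_pos (mul_pos (mul_pos hKpos hμpos) (Real.rpow_pos_of_pos hx.1 _))
          (hDpos x ⟨hx.1, hx.2.le⟩)
    exact this.monotoneOn
  have hmono' : MonotoneOn u (Set.Ioo (0:ℝ) 1) :=
    hmono.mono Set.Ioo_subset_Ioc_self
  -- u is bounded below on (0,1)
  have hlb : ∀ t ∈ Set.Ioo (0:ℝ) 1, C / (1 - K) ≤ u t := by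
    intro t ht
    have ht' : t ∈ Set.Ioc (0:ℝ) 1 := ⟨ht.1, ht.2.le⟩
    have h1 := hconst t ht'
    have h2 : Real.log (Real.exp (2 * u t)) ≤
        Real.log (t ^ (2*μ) + Real.exp (2 * u t)) :=
      Real.log_le_log (Real.exp_pos _)
        (le_add_of_nonneg_left (Real.rpow_pos_of_pos ht.1 _).le)
    rw [Real.log_exp] at h2
    simp only [hφdef] at h1
    have h3 : K/2 * (2 * u t) ≤
        K/2 * Real.log (t ^ (2*μ) + Real.exp (2 * u t)) :=
      mul_le_mul_of_nonneg_left h2 (by linarith)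
    rw [show K/2 * (2 * u t) = K * u t from by ring] at h3
    rw [div_le_iff₀ h1K, show u t * (1 - K) = u t - K * u t from by ring]
    linarith
  have hbdd : BddBelow (u '' Set.Ioo (0:ℝ) 1) := by
    refine ⟨C / (1 - K), ?_⟩
    rintro y ⟨x, hx, rfl⟩
    exact hlb x hx
  -- the limit exists
  obtain ⟨L, hL⟩ : ∃ L, Filter.Tendsto u (nhdsWithin 0 (Set.Ioi 0)) (nhds L) :=
    ⟨_, MonotoneOn.tendsto_nhdsWithin_Ioo_right ⟨1/2, by norm_num⟩ hmono' hbdd⟩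
  -- φ tends to L - K/2 * log(0 + exp(2L)) along 𝓝[>]0
  have hrpow : Filter.Tendsto (fun t : ℝ => t ^ (2*μ)) (nhdsWithin 0 (Set.Ioi 0)) (nhds 0) := by
    have h0 : Filter.Tendsto (fun t : ℝ => t ^ (2*μ)) (nhdsWithin 0 (Set.Ioi 0))
        (nhds ((0:ℝ) ^ (2*μ))) :=
      ((Real.continuousAt_rpow_const 0 (2*μ) (Or.inr (by linarith))).continuousWithinAt
        (s := Set.Ioi 0))
    rwa [Real.zero_rpow (by linarith : (0:ℝ) < 2*μ).ne'] at h0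
  have hexpL : Filter.Tendsto (fun t => Real.exp (2 * u t)) (nhdsWithin 0 (Set.Ioi 0))
      (nhds (Real.exp (2 * L))) :=
    (Real.continuous_exp.tendsto _).comp (hL.const_mul 2)
  have hsum : Filter.Tendsto (fun t => t ^ (2*μ) + Real.exp (2 * u t))
      (nhdsWithin 0 (Set.Ioi 0)) (nhds (0 + Real.exp (2 * L))) := hrpow.add hexpL
  have hlogL : Filter.Tendsto (fun t => Real.log (t ^ (2*μ) + Real.exp (2 * u t)))
      (nhdsWithin 0 (Set.Ioi 0)) (nhds (Real.log (0 + Real.exp (2 * L)))) :=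
    ((Real.continuousAt_log (by positivity)).tendsto).comp hsum
  have hφlim : Filter.Tendsto φ (nhdsWithin 0 (Set.Ioi 0))
      (nhds (L - K/2 * Real.log (0 + Real.exp (2 * L)))) :=
    hL.sub (hlogL.const_mul (K/2))
  -- but φ is eventually constant, so we identify the limit
  have hev : ∀ᶠ t in nhdsWithin 0 (Set.Ioi 0), φ t = C := by
    filter_upwards [Ioo_mem_nhdsGT_of_mem (Set.mem_Ico.2 ⟨le_refl (0:ℝ), one_pos⟩)]
      with t ht
    exact hconst t ⟨ht.1, ht.2.le⟩
  have hφlim' : Filter.Tendsto φ (nhdsWithin 0 (Set.Ioi 0)) (nhds C) :=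
    Filter.Tendsto.congr' (Filter.EventuallyEq.symm hev) tendsto_const_nhds
  have hEq : L - K/2 * Real.log (0 + Real.exp (2 * L)) = C :=
    tendsto_nhds_unique hφlim hφlim'
  rw [zero_add, Real.log_exp] at hEq
  -- conclude
  have hLval : L = u₀ / (1 - K) - (K / (2*(1 - K))) * Real.log (1 + Real.exp (2*u₀)) := by
    rw [hCdef] at hEq
    have h2 : L = (u₀ - K/2 * Real.log (1 + Real.exp (2 * u₀))) / (1 - K) := by
      rw [eq_div_iff h1K.ne']
      linear_combination hEq
    rw [h2]
    field_simp
  rwa [hLval] at hL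
end

section
/- Let 1/3 < K < 1 and μ = (3K−1)/(1−K), and suppose z, w : (0,1] × ℝ → ℝ are C¹ and satisfy the T²-symmetric Euler system ∂_t z − (w/(t^{2μ}+w²)^{1/2}) ∂_x z − (t^{2μ}/(t^{2μ}+w²)^{3/2}) ∂_x w = 0 and ∂_t w − (K t^{2μ}(t^{2μ}+w²)^{1/2}/(t^{2μ}−(K−1)w²)) ∂_x z + (((2K−1)t^{2μ}+(K−1)w²) w/((t^{2μ}+w²)^{1/2}(t^{2μ}−(K−1)w²))) ∂_x w = t^{2μ−1}(−3K+μ+1) w/(t^{2μ}−(K−1)w²). Define v₁ = t^{−μ} w, v₀ = (1 + v₁²)^{1/2}, v⁰ = −v₀, v¹ = v₁, and ζ = z − ln v₀. Then on (0,1] × ℝ the pair (ζ, v₁) satisfies the two equations K ∂_t ζ − (K v₁/(v⁰ v₀)) ∂_t v₁ + (1/v⁰)( K v¹ ∂_x ζ + K ∂_x v₁ ) = 0 and −(K v₁/(v⁰ v₀)) ∂_t ζ + (1/v₀²) ∂_t v₁ + (1/v⁰)( K ∂_x ζ + (v¹/v₀²) ∂_x v₁ ) = −(1/(t v⁰)) ·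 ((1−3K)/v₀) · v₁. -/
/-!
With `T = t^μ`, `v₁ = w / T` and `v₀ = √(1 + v₁²)`, the real powers in the Euler system become
rational in `(T, v₁, v₀)`: `(t^{2μ} + w²)^{1/2} = v₀ T` and
`t^{2μ} - (K - 1) w² = T² (1 + (1 - K) v₁²)`. Clearing denominators turns the two Euler equations
into polynomial identities, and the chain rule gives `∂ζ = ∂z - v₁ ∂v₁ / v₀²`. Both target
equations are then linear combinations of these identities, of `v₀² = 1 + v₁²` and of
`μ (1 - K) = 3K - 1`.
-/

open Real

lemma HasDerivAt.log_sqrt_one_add_sq {f : ℝ → ℝ} {f' a : ℝ} (hf : HasDerivAt f f' a) :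
    HasDerivAt (fun s => Real.log √(1 + f s ^ 2)) (f a * f' / (1 + f a ^ 2)) a := by
  have hpos : ∀ s, 0 < 1 + f s ^ 2 := fun s => by positivity
  have h : HasDerivAt (fun s => Real.log (1 + f s ^ 2) / 2) (f a * f' / (1 + f a ^ 2)) a := by
    refine ((((hf.pow 2).const_add 1).log (hpos a).ne').div_const 2).congr_deriv ?_
    simp only [Pi.pow_apply]
    field_simp
    ring
  simpa only [log_sqrt (hpos _).le] using h

lemma HasDerivAt.rpow_neg_mul {f : ℝ → ℝ} {f' t μ : ℝ} (ht : 0 < t)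
    (hf : HasDerivAt f f' t) :
    HasDerivAt (fun s => s ^ (-μ) * f s) (-μ * (t ^ (-μ) * f t) / t + f' / t ^ μ) t := by
  refine ((hasDerivAt_rpow_const (p := -μ) (Or.inl ht.ne')).mul hf).congr_deriv ?_
  rw [rpow_sub_one ht.ne', rpow_neg ht.le]
  ring

lemma rpow_three_halves {x : ℝ} (hx : 0 ≤ x) : x ^ ((3 : ℝ) / 2) = √x ^ 3 := by
  rw [sqrt_eq_rpow, ← rpow_natCast, ← rpow_mul hx]
  norm_num

lemma sqrt_sq_add_mul_sq {T : ℝ} (u : ℝ) (hT : 0 ≤ T) :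
    √(T ^ 2 + (u * T) ^ 2) = √(1 + u ^ 2) * T := by
  rw [show T ^ 2 + (u * T) ^ 2 = (1 + u ^ 2) * T ^ 2 by ring, sqrt_mul (by positivity), sqrt_sq hT]

lemma rpow_two_mul_eq_sq {t : ℝ} (ht : 0 ≤ t) (μ : ℝ) : t ^ (2 * μ) = (t ^ μ) ^ 2 := by
  rw [mul_comm, ← rpow_mul_natCast ht]
  norm_num

section NormalForm

variable {K μ t T u W zt zx wt wx : ℝ}

lemma euler_first_eq_normal_form (ht : 0 < t) (hT : t ^ μ = T) (hW : W = u * T)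
    (h : zt - (W / (t ^ (2*μ) + W^2) ^ ((1:ℝ)/2)) * zx
      - (t ^ (2*μ) / (t ^ (2*μ) + W^2) ^ ((3:ℝ)/2)) * wx = 0) :
    zt * (√(1 + u ^ 2) ^ 3 * T) = u * √(1 + u ^ 2) ^ 2 * T * zx + wx := by
  have hT0 : 0 < T := hT ▸ rpow_pos_of_pos ht μ
  have hP0 : 0 < √(1 + u ^ 2) := sqrt_pos.2 (by positivity)
  subst hT hW
  rw [rpow_two_mul_eq_sq ht.le, ← sqrt_eq_rpow, rpow_three_halves (by positivity),
    sqrt_sq_add_mul_sq u hT0.le] at h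
  field_simp at h
  linear_combination h

lemma euler_second_eq_normal_form (ht : 0 < t) (hK : K ≤ 1) (hT : t ^ μ = T) (hW : W = u * T)
    (h : wt - (K * t ^ (2*μ) * (t ^ (2*μ) + W^2) ^ ((1:ℝ)/2) /
          (t ^ (2*μ) - (K - 1) * W^2)) * zx
        + (((2*K - 1) * t ^ (2*μ) + (K - 1) * W^2) * W /
          ((t ^ (2*μ) + W^2) ^ ((1:ℝ)/2) * (t ^ (2*μ) - (K - 1) * W^2))) * wx
        = t ^ (2*μ - 1) * (-3*K + μ + 1) * W / (t ^ (2*μ) - (K - 1) * W^2)) :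
    wt * (t * √(1 + u ^ 2) * (1 + (1 - K) * u ^ 2)) = K * T * √(1 + u ^ 2) ^ 2 * t * zx
      - ((2*K - 1) + (K - 1) * u ^ 2) * (u * t) * wx
      + (-3*K + μ + 1) * (u * T) * √(1 + u ^ 2) := by
  have hT0 : 0 < T := hT ▸ rpow_pos_of_pos ht μ
  have hP0 : 0 < √(1 + u ^ 2) := sqrt_pos.2 (by positivity)
  have hd : 1 + u ^ 2 * (1 - K) ≠ 0 := by nlinarith [sq_nonneg u]
  have hD : T ^ 2 - (K - 1) * (u * T) ^ 2 = T ^ 2 * (1 + (1 - K) * u ^ 2) := by ring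
  subst hT hW
  rw [rpow_sub_one ht.ne', rpow_two_mul_eq_sq ht.le, ← sqrt_eq_rpow, hD,
    sqrt_sq_add_mul_sq u hT0.le] at h
  field_simp at h
  linear_combination h

end NormalForm

lemma symmetric_form_of_normal_form {K μ t T u P zt zx wt wx Dtv Dxv Dtζ Dxζ : ℝ}
    (ht : t ≠ 0) (hT : T ≠ 0) (hP : P ≠ 0) (hP2 : P ^ 2 = 1 + u ^ 2)
    (hμ : μ * (1 - K) = 3*K - 1)
    (E1 : zt * (P ^ 3 * T) = u * P ^ 2 * T * zx + wx)
    (E2 : wt * (t * P * (1 + (1 - K) * u ^ 2)) = K * T * P ^ 2 * t * zx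
      - ((2*K - 1) + (K - 1) * u ^ 2) * (u * t) * wx + (-3*K + μ + 1) * (u * T) * P)
    (hDtv : Dtv = -μ * u / t + wt / T) (hDxv : Dxv = wx / T)
    (hDtζ : Dtζ = zt - u * Dtv / (1 + u ^ 2)) (hDxζ : Dxζ = zx - u * Dxv / (1 + u ^ 2)) :
    (K * Dtζ - (K * u / (-P * P)) * Dtv + (1 / -P) * (K * u * Dxζ + K * Dxv) = 0) ∧
    (-(K * u / (-P * P)) * Dtζ + (1 / P ^ 2) * Dtv + (1 / -P) * (K * Dxζ + (u / P ^ 2) * Dxv)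
      = -(1 / (t * -P)) * ((1 - 3*K) / P) * u) := by
  rw [← hP2] at hDtζ hDxζ
  subst hDtζ hDxζ hDtv hDxv
  constructor
  · field_simp
    linear_combination K * t * E1 - K * t * wx * hP2
  · field_simp
    apply mul_left_cancel₀ hP
    linear_combination K * u * t * E1 + E2 + (t * P * wt - K * P ^ 2 * t * T * zx
      + (K - 1) * u * t * wx - P * u * μ * T - u * P * T * (1 - 3*K)) * hP2 - u ^ 3 * T * P * hμ

theorem stmt19_general (K μ : ℝ) (hK' : K < 1)
    (hμ : μ = (3*K - 1)/(1 - K))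
    (z w : ℝ → ℝ → ℝ)
    (zt zx wt wx : ℝ → ℝ → ℝ)
    (hzt : ∀ t ∈ Set.Ioc (0:ℝ) 1, ∀ x : ℝ, HasDerivAt (fun s => z s x) (zt t x) t)
    (hzx : ∀ t ∈ Set.Ioc (0:ℝ) 1, ∀ x : ℝ, HasDerivAt (fun y => z t y) (zx t x) x)
    (hwt : ∀ t ∈ Set.Ioc (0:ℝ) 1, ∀ x : ℝ, HasDerivAt (fun s => w s x) (wt t x) t)
    (hwx : ∀ t ∈ Set.Ioc (0:ℝ) 1, ∀ x : ℝ, HasDerivAt (fun y => w t y) (wx t x) x)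
    (heq1 : ∀ t ∈ Set.Ioc (0:ℝ) 1, ∀ x : ℝ,
      zt t x - (w t x / (t ^ (2*μ) + (w t x)^2) ^ ((1:ℝ)/2)) * zx t x
        - (t ^ (2*μ) / (t ^ (2*μ) + (w t x)^2) ^ ((3:ℝ)/2)) * wx t x = 0)
    (heq2 : ∀ t ∈ Set.Ioc (0:ℝ) 1, ∀ x : ℝ,
      wt t x - (K * t ^ (2*μ) * (t ^ (2*μ) + (w t x)^2) ^ ((1:ℝ)/2) /
          (t ^ (2*μ) - (K - 1) * (w t x)^2)) * zx t x
        + (((2*K - 1) * t ^ (2*μ) + (K - 1) * (w t x)^2) * w t x /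
          ((t ^ (2*μ) + (w t x)^2) ^ ((1:ℝ)/2) * (t ^ (2*μ) - (K - 1) * (w t x)^2)))
          * wx t x
        = t ^ (2*μ - 1) * (-3*K + μ + 1) * w t x /
            (t ^ (2*μ) - (K - 1) * (w t x)^2)) :
    ∀ t ∈ Set.Ioc (0:ℝ) 1, ∀ x : ℝ, ∀ v₁ v₀ vup0 vup1 : ℝ,
      v₁ = t ^ (-μ) * w t x →
      v₀ = (1 + v₁^2) ^ ((1:ℝ)/2) →
      vup0 = -v₀ →
      vup1 = v₁ →
      ∀ Dtζ Dxζ Dtv Dxv : ℝ,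
      HasDerivAt (fun s => z s x - Real.log ((1 + (s ^ (-μ) * w s x)^2) ^ ((1:ℝ)/2)))
        Dtζ t →
      HasDerivAt (fun y => z t y - Real.log ((1 + (t ^ (-μ) * w t y)^2) ^ ((1:ℝ)/2)))
        Dxζ x →
      HasDerivAt (fun s => s ^ (-μ) * w s x) Dtv t →
      HasDerivAt (fun y => t ^ (-μ) * w t y) Dxv x →
      (K * Dtζ - (K * v₁ / (vup0 * v₀)) * Dtv
          + (1 / vup0) * (K * vup1 * Dxζ + K * Dxv) = 0) ∧
      (-(K * v₁ / (vup0 * v₀)) * Dtζ + (1 / v₀^2) * Dtv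
          + (1 / vup0) * (K * Dxζ + (vup1 / v₀^2) * Dxv)
        = -(1 / (t * vup0)) * ((1 - 3*K) / v₀) * v₁) := by
  intro t ht x v₁ v₀ vup0 vup1 hv₁ hv₀ hvup0 hvup1 Dtζ Dxζ Dtv Dxv hDtζ hDxζ hDtv hDxv
  simp only [← sqrt_eq_rpow] at hv₀ hDtζ hDxζ
  subst v₀ vup0 vup1
  have hT : 0 < t ^ μ := rpow_pos_of_pos ht.1 μ
  have hW : w t x = v₁ * t ^ μ := by
    rw [hv₁, rpow_neg ht.1.le]
    field_simp
  have eDtv := hDtv.unique ((hwt t ht x).rpow_neg_mul ht.1)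
  have eDxv := hDxv.unique ((hwx t ht x).const_mul _)
  have eDtζ := hDtζ.unique ((hzt t ht x).sub (hDtv.log_sqrt_one_add_sq))
  have eDxζ := hDxζ.unique ((hzx t ht x).sub (hDxv.log_sqrt_one_add_sq))
  rw [← hv₁] at eDtv eDtζ eDxζ
  rw [rpow_neg ht.1.le, inv_mul_eq_div] at eDxv
  have hμ' : μ * (1 - K) = 3*K - 1 := by rw [hμ]; exact div_mul_cancel₀ _ (by linarith)
  exact symmetric_form_of_normal_form ht.1.ne' hT.ne' (sqrt_pos.2 (by positivity)).ne'
    (sq_sqrt (by positivity)) hμ'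
    (euler_first_eq_normal_form ht.1 rfl hW (heq1 t ht x))
    (euler_second_eq_normal_form ht.1 hK'.le rfl hW (heq2 t ht x)) eDtv eDxv eDtζ eDxζ

/-- A C¹ solution `(z, w)` of the T²-symmetric Euler system yields, via
`v₁ = t^{−μ} w`, `v₀ = (1 + v₁²)^{1/2}`, `v⁰ = −v₀`, `v¹ = v₁`, `ζ = z − ln v₀`,
a solution of the two nontrivial components of the symmetric hyperbolic
formulation of the relativistic Euler equations. -/
theorem stmt19 (K μ : ℝ) (hK : 1/3 < K) (hK' : K < 1)
    (hμ : μ = (3*K - 1)/(1 - K))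
    (z w : ℝ → ℝ → ℝ)
    (hC1z : ContDiffOn ℝ 1 (Function.uncurry z)
      (Set.Ioc (0:ℝ) 1 ×ˢ (Set.univ : Set ℝ)))
    (hC1w : ContDiffOn ℝ 1 (Function.uncurry w)
      (Set.Ioc (0:ℝ) 1 ×ˢ (Set.univ : Set ℝ)))
    (zt zx wt wx : ℝ → ℝ → ℝ)
    (hzt : ∀ t ∈ Set.Ioc (0:ℝ) 1, ∀ x : ℝ, HasDerivAt (fun s => z s x) (zt t x) t)
    (hzx : ∀ t ∈ Set.Ioc (0:ℝ) 1, ∀ x : ℝ, HasDerivAt (fun y => z t y) (zx t x) x)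
    (hwt : ∀ t ∈ Set.Ioc (0:ℝ) 1, ∀ x : ℝ, HasDerivAt (fun s => w s x) (wt t x) t)
    (hwx : ∀ t ∈ Set.Ioc (0:ℝ) 1, ∀ x : ℝ, HasDerivAt (fun y => w t y) (wx t x) x)
    (heq1 : ∀ t ∈ Set.Ioc (0:ℝ) 1, ∀ x : ℝ,
      zt t x - (w t x / (t ^ (2*μ) + (w t x)^2) ^ ((1:ℝ)/2)) * zx t x
        - (t ^ (2*μ) / (t ^ (2*μ) + (w t x)^2) ^ ((3:ℝ)/2)) * wx t x = 0)
    (heq2 : ∀ t ∈ Set.Ioc (0:ℝ) 1, ∀ x : ℝ,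
      wt t x - (K * t ^ (2*μ) * (t ^ (2*μ) + (w t x)^2) ^ ((1:ℝ)/2) /
          (t ^ (2*μ) - (K - 1) * (w t x)^2)) * zx t x
        + (((2*K - 1) * t ^ (2*μ) + (K - 1) * (w t x)^2) * w t x /
          ((t ^ (2*μ) + (w t x)^2) ^ ((1:ℝ)/2) * (t ^ (2*μ) - (K - 1) * (w t x)^2)))
          * wx t x
        = t ^ (2*μ - 1) * (-3*K + μ + 1) * w t x /
            (t ^ (2*μ) - (K - 1) * (w t x)^2)) :
    ∀ t ∈ Set.Ioc (0:ℝ) 1, ∀ x : ℝ, ∀ v₁ v₀ vup0 vup1 : ℝ,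
      v₁ = t ^ (-μ) * w t x →
      v₀ = (1 + v₁^2) ^ ((1:ℝ)/2) →
      vup0 = -v₀ →
      vup1 = v₁ →
      ∀ Dtζ Dxζ Dtv Dxv : ℝ,
      HasDerivAt (fun s => z s x - Real.log ((1 + (s ^ (-μ) * w s x)^2) ^ ((1:ℝ)/2)))
        Dtζ t →
      HasDerivAt (fun y => z t y - Real.log ((1 + (t ^ (-μ) * w t y)^2) ^ ((1:ℝ)/2)))
        Dxζ x →
      HasDerivAt (fun s => s ^ (-μ) * w s x) Dtv t →
      HasDerivAt (fun y => t ^ (-μ) * w t y) Dxv x →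
      (K * Dtζ - (K * v₁ / (vup0 * v₀)) * Dtv
          + (1 / vup0) * (K * vup1 * Dxζ + K * Dxv) = 0) ∧
      (-(K * v₁ / (vup0 * v₀)) * Dtζ + (1 / v₀^2) * Dtv
          + (1 / vup0) * (K * Dxζ + (vup1 / v₀^2) * Dxv)
        = -(1 / (t * vup0)) * ((1 - 3*K) / v₀) * v₁) :=
  stmt19_general K μ hK' hμ z w zt zx wt wx hzt hzx hwt hwx heq1 heq2
end
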